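/- arXiv:2304.07458 — 2 statements merged into one kernel-verified Lean document; each statement's English description precedes it below -/
import Mathlib

section
/- Let G_i = (V_i, E_i) be a subgraph with entry set V_i^I and exit set V_i^O. Suppose every path in G from a vertex outside G_i to a vertex outside G_i that passes through G_i must enter via some entry vertex and leave via some exit vertex. Replacing the internal edges E_i by shortcuts {(u,v) : u ∈ V_i^I, v ∈ V_i^O} with weight equal to the shortest internal distance from u to v preserves all shortest-path distances between vertices of V \ V_i. -/
/-!
A function `f` with `f x ≤ 0` that no edge raises by more than its weight bounds the distance
from `x` from below. For `≥` take `f = wdist W x`: every contracted edge weighs at least the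
original distance between its ends. For `≤`, a walk from outside can only enter the subgraph
through an entry vertex and leave it through an exit vertex, so its internal segments are
dominated by shortcuts; this is captured by a potential that, inside the subgraph, is the
contracted distance to an entry vertex plus the internal distance onward.
-/

open ENNReal

attribute [local instance] Classical.propDecidable

variable {V : Type*}

/-- The endpoint of a walk that starts at `u` and then visits the vertices in `p`. -/
def walkEnd (u : V) : List V → V
  | [] => u
  | v :: p => walkEnd v p

/-- The weight of a walk starting at `u` and visiting the vertices of `p`, where
`W a b = ⊤` encodes the absence of an edge from `a` to `b`. -/
noncomputable def walkWeight (W : V → V → ℝ≥0∞) (u : V) : List V → ℝ≥0∞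
  | [] => 0
  | v :: p => W u v + walkWeight W v p

/-- Shortest-walk (min-plus) distance: the infimum of walk weights from `u` to `v`
(`0` if `u = v`, `⊤` if there is no walk of finite weight). -/
noncomputable def wdist (W : V → V → ℝ≥0∞) (u v : V) : ℝ≥0∞ :=
  ⨅ p ∈ {p : List V | walkEnd u p = v}, walkWeight W u p

lemma walkEnd_append (u : V) (p q : List V) :
    walkEnd u (p ++ q) = walkEnd (walkEnd u p) q := by
  induction p generalizing u with
  | nil => rfl
  | cons v p ih => exact ih v

lemma walkWeight_append (W : V → V → ℝ≥0∞) (u : V) (p q : List V) :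
    walkWeight W u (p ++ q) = walkWeight W u p + walkWeight W (walkEnd u p) q := by
  induction p generalizing u with
  | nil => simp [walkWeight, walkEnd]
  | cons v p ih => simp [walkWeight, walkEnd, ih, add_assoc]

section wdist

variable (W : V → V → ℝ≥0∞)

lemma wdist_le_walkWeight {u v : V} {p : List V} (h : walkEnd u p = v) :
    wdist W u v ≤ walkWeight W u p :=
  iInf₂_le p h

@[simp]
lemma wdist_self (u : V) : wdist W u u = 0 :=
  nonpos_iff_eq_zero.mp (wdist_le_walkWeight W (p := []) rfl)

lemma wdist_le_edge (u v : V) : wdist W u v ≤ W u v := by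
  simpa [walkWeight] using wdist_le_walkWeight W (u := u) (v := v) (p := [v]) rfl

lemma wdist_triangle (u v t : V) : wdist W u t ≤ wdist W u v + wdist W v t := by
  simp only [wdist, ENNReal.iInf_add, ENNReal.add_iInf]
  refine le_iInf₂ fun q (hq : walkEnd v q = t) => le_iInf₂ fun p (hp : walkEnd u p = v) => ?_
  calc wdist W u t ≤ walkWeight W u (p ++ q) :=
        wdist_le_walkWeight W (by rw [walkEnd_append, hp, hq])
    _ = walkWeight W u p + walkWeight W v q := by rw [walkWeight_append, hp]

lemma wdist_le_wdist_add_edge (u v t : V) : wdist W u t ≤ wdist W u v + W v t :=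
  (wdist_triangle W u v t).trans (add_le_add_right (wdist_le_edge W v t) _)

lemma le_wdist_of_le_add_edge {f : V → ℝ≥0∞} {x : V} (hx : f x ≤ 0)
    (hstep : ∀ a b, f b ≤ f a + W a b) (y : V) : f y ≤ wdist W x y := by
  have walk : ∀ (p : List V) (u : V), f (walkEnd u p) ≤ f u + walkWeight W u p := by
    intro p
    induction p with
    | nil => simp [walkEnd, walkWeight]
    | cons v p ih =>
      intro u
      calc f (walkEnd v p) ≤ f v + walkWeight W v p := ih v
        _ ≤ f u + W u v + walkWeight W v p := add_le_add_left (hstep u v) _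
        _ = f u + walkWeight W u (v :: p) := by rw [add_assoc]; rfl
  refine le_iInf₂ fun p (hp : walkEnd x p = y) => ?_
  simpa [hp, nonpos_iff_eq_zero.mp hx] using walk p x

lemma wdist_le_wdist_of_le {W' : V → V → ℝ≥0∞} (h : ∀ a b, wdist W a b ≤ W' a b) (x y : V) :
    wdist W x y ≤ wdist W' x y :=
  le_wdist_of_le_add_edge W' (wdist_self W x).le
    (fun a b => (wdist_triangle W x a b).trans (add_le_add_right (h a b) _)) y

lemma wdist_mono {W' : V → V → ℝ≥0∞} (h : ∀ a b, W a b ≤ W' a b) (x y : V) :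
    wdist W x y ≤ wdist W' x y :=
  wdist_le_wdist_of_le W (fun a b => (wdist_le_edge W a b).trans (h a b)) x y

end wdist

section shortcuts

variable {W Wint W' : V → V → ℝ≥0∞} {S entry exit : Set V}

theorem wdist_le_of_shortcuts (hout : ∀ a b, a ∉ S ∨ b ∉ S → W' a b ≤ W a b)
    (hin : ∀ a b, a ∈ S → b ∈ S → Wint a b ≤ W a b)
    (hentry : ∀ a b, a ∉ S → b ∈ S → W a b ≠ ⊤ → b ∈ entry)
    (hexit : ∀ a b, a ∈ S → b ∉ S → W a b ≠ ⊤ → a ∈ exit)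
    (hshortcut : ∀ a ∈ entry, ∀ b ∈ exit, W' a b ≤ wdist Wint a b)
    {x y : V} (hx : x ∉ S) (hy : y ∉ S) : wdist W' x y ≤ wdist W x y := by
  let f : V → ℝ≥0∞ := fun z =>
    if z ∈ S then ⨅ a ∈ entry, wdist W' x a + wdist Wint a z else wdist W' x z
  have hstep : ∀ z c, f c ≤ f z + W z c := by
    intro z c
    by_cases hzc : W z c = ⊤
    · simp [hzc]
    by_cases hz : z ∈ S <;> by_cases hc : c ∈ S
    · simp only [f, hz, hc, if_true, ENNReal.iInf_add]
      refine le_iInf₂ fun a ha => (iInf₂_le a ha).trans ?_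
      calc wdist W' x a + wdist Wint a c ≤ wdist W' x a + (wdist Wint a z + Wint z c) :=
            add_le_add_right (wdist_le_wdist_add_edge Wint a z c) _
        _ ≤ wdist W' x a + wdist Wint a z + W z c := by
            rw [← add_assoc]; exact add_le_add_right (hin z c hz hc) _
    · simp only [f, hz, hc, if_true, if_false, ENNReal.iInf_add]
      refine le_iInf₂ fun a ha => ?_
      calc wdist W' x c ≤ wdist W' x a + W' a z + W' z c :=
            (wdist_le_wdist_add_edge W' x z c).trans
              (add_le_add_left (wdist_le_wdist_add_edge W' x a z) _)
        _ ≤ wdist W' x a + wdist Wint a z + W z c := by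
            gcongr
            · exact hshortcut a ha z (hexit z c hz hc hzc)
            · exact hout z c (Or.inr hc)
    · simp only [f, hz, hc, if_true, if_false]
      refine (iInf₂_le c (hentry z c hz hc hzc)).trans ?_
      rw [wdist_self, add_zero]
      exact (wdist_le_wdist_add_edge W' x z c).trans (add_le_add_right (hout z c (Or.inl hz)) _)
    · simp only [f, hz, hc, if_false]
      exact (wdist_le_wdist_add_edge W' x z c).trans (add_le_add_right (hout z c (Or.inl hz)) _)
  simpa [f, hy] using le_wdist_of_le_add_edge W (f := f) (by simp [f, hx]) hstep y

end shortcuts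

/-- Replacing the internal edges of a subgraph `G_i` by shortcuts
from each entry vertex to each exit vertex, weighted by the internal shortest
distance, preserves all shortest-path distances between vertices outside `G_i`. -/
theorem stmt4 (E : Set (V × V)) (w : V → V → ℝ≥0∞) (Vi : Set V) :
    let W : V → V → ℝ≥0∞ := fun a b => if (a, b) ∈ E then w a b else ⊤
    let entry : Set V := {x | x ∈ Vi ∧ ∃ u, u ∉ Vi ∧ (u, x) ∈ E}
    let exitV : Set V := {x | x ∈ Vi ∧ ∃ u, u ∉ Vi ∧ (x, u) ∈ E}
    -- internal edges of the subgraph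
    let Wint : V → V → ℝ≥0∞ := fun a b =>
      if (a, b) ∈ E ∧ a ∈ Vi ∧ b ∈ Vi then w a b else ⊤
    -- contracted graph: internal edges removed, shortcuts entry → exit added
    let W' : V → V → ℝ≥0∞ := fun a b =>
      if a ∈ Vi ∧ b ∈ Vi then
        (if a ∈ entry ∧ b ∈ exitV then wdist Wint a b else ⊤)
      else W a b
    ∀ x y, x ∉ Vi → y ∉ Vi → wdist W' x y = wdist W x y := by
  intro W entry exitV Wint W' x y hx hy
  have hE : ∀ {a b}, W a b ≠ ⊤ → (a, b) ∈ E := fun h => by_contra fun hab => h (if_neg hab)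
  have hW'_outside : ∀ a b, a ∉ Vi ∨ b ∉ Vi → W' a b = W a b := fun a b h =>
    if_neg fun hab => h.elim (· hab.1) (· hab.2)
  have hWint_inside : ∀ a b, a ∈ Vi → b ∈ Vi → Wint a b ≤ W a b := fun a b ha hb => by
    by_cases hab : (a, b) ∈ E <;> simp [W, Wint, ha, hb, hab]
  have hW_le_Wint : ∀ a b, W a b ≤ Wint a b := fun a b => by
    by_cases hab : (a, b) ∈ E ∧ a ∈ Vi ∧ b ∈ Vi <;> simp [W, Wint, hab]
  have hW'_ge : ∀ a b, wdist W a b ≤ W' a b := fun a b => by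
    by_cases h : a ∈ Vi ∧ b ∈ Vi
    · by_cases hs : a ∈ entry ∧ b ∈ exitV <;> simp only [W', h, hs, and_self, if_true, if_false]
      exacts [wdist_mono W hW_le_Wint a b, le_top]
    · exact (hW'_outside a b (not_and_or.mp h)).ge.trans' (wdist_le_edge W a b)
  refine le_antisymm ?_ (wdist_le_wdist_of_le W hW'_ge x y)
  refine wdist_le_of_shortcuts (entry := entry) (exit := exitV)
    (fun a b h => (hW'_outside a b h).le) hWint_inside
    (fun a b ha hb h => ⟨hb, a, ha, hE h⟩) (fun a b ha hb h => ⟨ha, b, hb, hE h⟩) ?_ hx hy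
  intro a ha b hb
  simp [W', ha, hb, ha.1, hb.1]
end

section
/- With the setup of accumulative PageRank (damping d ∈ (0,1), every vertex with out-degree N_u ≥ 1), the limit vertex states x_v = Σ_{k≥0} (sum of round-k messages arriving at v) satisfy the PageRank fixed-point equation: x_v = (1 − d) + d · Σ_{(u,v) ∈ E} x_u / N_u for every vertex v. -/
/-!
All messages are nonnegative, and one round multiplies the total mass `∑ v, msg k v` by at most
`d`: a vertex `u` holding `m` sends `d * m / N u` along each of its `N u` out-edges. So the total
mass decays geometrically, every `k ↦ msg k v` is summable, and summing the recurrence over all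
rounds `k ≥ 1` (a finite sum of summable series) gives the fixed-point equation.
-/

open Finset Filter

theorem summable_apply_of_sum_succ_le {V : Type*} [Fintype V] {f : ℕ → V → ℝ} {r : ℝ}
    (hf : ∀ k v, 0 ≤ f k v) (hr : r < 1) (hcontract : ∀ k, ∑ v, f (k + 1) v ≤ r * ∑ v, f k v)
    (v : V) : Summable fun k ↦ f k v := by
  have hmass_nonneg : ∀ k, 0 ≤ ∑ v, f k v := fun k ↦ sum_nonneg fun v _ ↦ hf k v
  have hmass : Summable fun k ↦ ∑ v, f k v := by
    refine summable_of_ratio_norm_eventually_le hr (Eventually.of_forall fun k ↦ ?_)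
    simpa only [Real.norm_of_nonneg (hmass_nonneg _)] using hcontract k
  exact hmass.of_nonneg_of_le (fun k ↦ hf k v)
    fun k ↦ single_le_sum (fun u _ ↦ hf k u) (mem_univ v)

section PageRank

variable {V : Type*} [Fintype V] {E : V → V → Prop} [DecidableRel E] {d : ℝ} {N : V → ℕ}

theorem sum_sum_inNeighbors_le (hd : 0 ≤ d) (hN : ∀ u, N u = #{v : V | E u v}.toFinset)
    (m : V → ℝ) (hm : ∀ u, 0 ≤ m u) :
    ∑ v, ∑ u ∈ {u : V | E u v}.toFinset, d * m u / N u ≤ d * ∑ u, m u := by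
  have hswap : ∑ v, ∑ u ∈ {u : V | E u v}.toFinset, d * m u / N u
      = ∑ u, N u * (d * m u / N u) := by
    simp only [Set.toFinset_ofPred, sum_filter, hN]
    rw [sum_comm]
    simp only [← sum_filter, sum_const, nsmul_eq_mul]
  rw [hswap, mul_sum]
  refine sum_le_sum fun u _ ↦ ?_
  rcases Nat.eq_zero_or_pos (N u) with hNu | hNu
  · simpa [hNu] using mul_nonneg hd (hm u) -- a vertex without out-edges sends nothing
  · rw [mul_div_cancel₀ _ (by positivity)]

variable {msg : ℕ → V → ℝ}
  (hrec : ∀ k v, msg (k + 1) v = ∑ u ∈ {u : V | E u v}.toFinset, d * msg k u / (N u : ℝ))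
include hrec

theorem msg_nonneg (hd : 0 ≤ d) (h0 : ∀ v, 0 ≤ msg 0 v) : ∀ k v, 0 ≤ msg k v := by
  intro k
  induction k with
  | zero => exact h0
  | succ k ih =>
    intro v
    rw [hrec]
    exact sum_nonneg fun u _ ↦ div_nonneg (mul_nonneg hd (ih u)) (Nat.cast_nonneg _)

theorem summable_msg (hd0 : 0 ≤ d) (hd1 : d < 1) (hN : ∀ u, N u = #{v : V | E u v}.toFinset)
    (h0 : ∀ v, 0 ≤ msg 0 v) (v : V) : Summable fun k ↦ msg k v := by
  have hnn := msg_nonneg hrec hd0 h0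
  refine summable_apply_of_sum_succ_le hnn hd1 (fun k ↦ ?_) v
  simp only [hrec]
  exact sum_sum_inNeighbors_le hd0 hN (msg k) (hnn k)

end PageRank

theorem stmt6_general {V : Type*} [Fintype V] (E : V → V → Prop) [DecidableRel E]
    (d : ℝ) (hd0 : 0 < d) (hd1 : d < 1)
    (N : V → ℕ)
    (hN : ∀ u, N u = Finset.card {v : V | E u v}.toFinset)
    (msg : ℕ → V → ℝ)
    (h0 : ∀ v, msg 0 v = 1 - d)
    (hrec : ∀ k v, msg (k + 1) v = ∑ u ∈ {u : V | E u v}.toFinset, d * msg k u / (N u : ℝ)) :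
    ∀ v, (∑' k, msg k v) =
      (1 - d) + d * ∑ u ∈ {u : V | E u v}.toFinset, (∑' k, msg k u) / (N u : ℝ) := by
  have hsumm := summable_msg hrec hd0.le hd1 hN fun v ↦ (h0 v).symm ▸ sub_nonneg.2 hd1.le
  intro v
  rw [(hsumm v).tsum_eq_zero_add, h0]
  congr 1
  calc ∑' k, msg (k + 1) v
      = ∑' k, ∑ u ∈ {u : V | E u v}.toFinset, d * msg k u / (N u : ℝ) :=
        tsum_congr (hrec · v)
    _ = ∑ u ∈ {u : V | E u v}.toFinset, ∑' k, d * msg k u / (N u : ℝ) :=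
        Summable.tsum_finsetSum fun u _ ↦ ((hsumm u).mul_left d).div_const _
    _ = d * ∑ u ∈ {u : V | E u v}.toFinset, (∑' k, msg k u) / (N u : ℝ) := by
        simp only [mul_sum, tsum_div_const, tsum_mul_left, mul_div_assoc]

/-- In accumulative PageRank (damping `d ∈ (0,1)`, every vertex
with out-degree `N u ≥ 1`), the limit vertex states
`x v = ∑ₖ (sum of round-k messages arriving at v)` satisfy the PageRank
fixed-point equation `x v = (1 - d) + d * ∑_{(u,v) ∈ E} x u / N u`. -/
theorem stmt6 {V : Type*} [Fintype V] (E : V → V → Prop) [DecidableRel E]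
    (d : ℝ) (hd0 : 0 < d) (hd1 : d < 1)
    (N : V → ℕ)
    (hN : ∀ u, N u = Finset.card {v : V | E u v}.toFinset)
    (hN1 : ∀ u, 1 ≤ N u)
    (msg : ℕ → V → ℝ)
    (h0 : ∀ v, msg 0 v = 1 - d)
    (hrec : ∀ k v, msg (k + 1) v = ∑ u ∈ {u : V | E u v}.toFinset, d * msg k u / (N u : ℝ)) :
    ∀ v, (∑' k, msg k v) =
      (1 - d) + d * ∑ u ∈ {u : V | E u v}.toFinset, (∑' k, msg k u) / (N u : ℝ) :=
  stmt6_general E d hd0 hd1 N hN msg h0 hrec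
end
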